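/- The function Γ(x) = −4·log‖x‖ − 2·log( (1/√2)·log(1/‖x‖) ), defined for x ∈ ℝ² with 0 < ‖x‖ < 1, satisfies ΔΓ(x) = ‖x‖²·exp(Γ(x)) for all x with 0 < ‖x‖ < 1. -/

import Mathlib

/-- The Euclidean Laplacian on `ℝ²`: `Δu = ∂²u/∂x₁² + ∂²u/∂x₂²`. -/
noncomputable def laplacian (u : EuclideanSpace ℝ (Fin 2) → ℝ)
    (x : EuclideanSpace ℝ (Fin 2)) : ℝ :=
  ∑ i : Fin 2,
    fderiv ℝ (fun y => fderiv ℝ u y (EuclideanSpace.single i 1)) x (EuclideanSpace.single i 1)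

/-!
Writing `t = ‖x‖²`, the profile is `Γ x = g t` with `g t = -2 log t - 2 log (-log t / (2√2))`.
For a function of `‖x‖²` on the plane, `Δ (g ∘ ‖·‖²) = 4 g' + 4 t g'' = 4 (t g')'`, and here
`t g' = -2 - 2 / log t`, so `ΔΓ = 8 / (t log² t)`, which is exactly `t · e^{g t}`.
-/

open Real Filter Topology
open scoped RealInnerProductSpace

section RadialFunction

variable {E : Type*} [NormedAddCommGroup E] [InnerProductSpace ℝ E]

theorem HasDerivAt.hasFDerivAt_comp_norm_sq {g : ℝ → ℝ} {g' : ℝ} {x : E}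
    (hg : HasDerivAt g g' (‖x‖ ^ 2)) :
    HasFDerivAt (fun y => g (‖y‖ ^ 2)) (g' • 2 • innerSL ℝ x) x :=
  hg.comp_hasFDerivAt x (hasStrictFDerivAt_norm_sq x).hasFDerivAt

theorem fderiv_fderiv_comp_norm_sq_apply {g g' : ℝ → ℝ} {g'' : ℝ} {x : E}
    (hg : ∀ᶠ s in 𝓝 (‖x‖ ^ 2), HasDerivAt g (g' s) s) (hg' : HasDerivAt g' g'' (‖x‖ ^ 2))
    (v : E) :
    fderiv ℝ (fun y => fderiv ℝ (fun y => g (‖y‖ ^ 2)) y v) x v =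
      2 * g' (‖x‖ ^ 2) * ‖v‖ ^ 2 + 4 * g'' * ⟪x, v⟫ ^ 2 := by
  have hfirst : (fun y => fderiv ℝ (fun y => g (‖y‖ ^ 2)) y v) =ᶠ[𝓝 x]
      fun y => g' (‖y‖ ^ 2) * (2 * ⟪v, y⟫) := by
    have hcont : Tendsto (fun y : E => ‖y‖ ^ 2) (𝓝 x) (𝓝 (‖x‖ ^ 2)) :=
      (continuous_norm.pow 2).continuousAt
    filter_upwards [hcont.eventually hg] with y hy
    rw [hy.hasFDerivAt_comp_norm_sq.fderiv]
    simp [real_inner_comm]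
  have hinner : HasFDerivAt (fun y => 2 * ⟪v, y⟫) ((2 : ℝ) • innerSL ℝ v) x :=
    (innerSL ℝ v).hasFDerivAt.const_mul 2
  rw [hfirst.fderiv_eq, HasFDerivAt.fderiv (f := fun y => g' (‖y‖ ^ 2) * (2 * ⟪v, y⟫))
    (hg'.hasFDerivAt_comp_norm_sq.mul hinner)]
  simp only [real_inner_comm, add_apply, smul_apply,
    innerSL_apply_apply, real_inner_self_eq_norm_sq, smul_eq_mul, nsmul_eq_mul, Nat.cast_ofNat]
  ring

end RadialFunction

theorem laplacian_comp_norm_sq {g g' : ℝ → ℝ} {g'' : ℝ} {x : EuclideanSpace ℝ (Fin 2)}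
    (hg : ∀ᶠ s in 𝓝 (‖x‖ ^ 2), HasDerivAt g (g' s) s) (hg' : HasDerivAt g' g'' (‖x‖ ^ 2)) :
    laplacian (fun y => g (‖y‖ ^ 2)) x = 4 * g' (‖x‖ ^ 2) + 4 * ‖x‖ ^ 2 * g'' := by
  simp only [laplacian, fderiv_fderiv_comp_norm_sq_apply hg hg', EuclideanSpace.inner_single_right,
    PiLp.norm_single, EuclideanSpace.real_norm_sq_eq x, Fin.sum_univ_two, norm_one, one_pow,
    mul_one, one_mul, conj_trivial]
  ring

noncomputable def greenProfile (t : ℝ) : ℝ := -2 * log t - 2 * log (-log t / (2 * √2))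

theorem greenProfile_sq (r : ℝ) :
    greenProfile (r ^ 2) = -4 * log r - 2 * log ((1 / √2) * log (1 / r)) := by
  rw [greenProfile, log_pow, one_div r, log_inv]
  push_cast
  rw [show -(2 * log r) / (2 * √2) = 1 / √2 * -log r by field_simp]
  ring

theorem hasDerivAt_greenProfile {t : ℝ} (ht : t ≠ 0) (hlog : log t ≠ 0) :
    HasDerivAt greenProfile (-2 / t - 2 / (t * log t)) t := by
  have hl := hasDerivAt_log ht
  have harg : -log t / (2 * √2) ≠ 0 := div_ne_zero (neg_ne_zero.mpr hlog) (by positivity)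
  refine ((hl.const_mul (-2)).sub
    (((hl.neg.div_const (2 * √2)).log harg).const_mul 2)).congr_deriv ?_
  simp only [Pi.neg_apply]
  field_simp

theorem hasDerivAt_deriv_greenProfile {t : ℝ} (ht : t ≠ 0) (hlog : log t ≠ 0) :
    HasDerivAt (fun s => -2 / s - 2 / (s * log s))
      (2 / t ^ 2 + 2 * (log t + 1) / (t * log t) ^ 2) t := by
  have hl := hasDerivAt_log ht
  refine (((hasDerivAt_inv ht).const_mul (-2)).sub
    ((((hasDerivAt_id' t).mul hl).inv (mul_ne_zero ht hlog)).const_mul 2)).congr_deriv ?_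
  simp only [Pi.mul_apply]
  field_simp
  ring

theorem exp_greenProfile {t : ℝ} (ht : t ≠ 0) (hlog : log t ≠ 0) :
    exp (greenProfile t) = 8 / (t * log t) ^ 2 := by
  have harg : -log t / (2 * √2) ≠ 0 := div_ne_zero (neg_ne_zero.mpr hlog) (by positivity)
  have hsum : greenProfile t = -log (t ^ 2 * (-log t / (2 * √2)) ^ 2) := by
    rw [greenProfile, log_mul (pow_ne_zero 2 ht) (pow_ne_zero 2 harg), log_pow, log_pow]
    ring
  rw [hsum, exp_neg, exp_log (by positivity)]
  field_simp
  rw [sq_sqrt zero_le_two]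
  ring

/-- The function `Γ(x) = −4 log‖x‖ − 2 log((1/√2) log(1/‖x‖))` satisfies
`ΔΓ = ‖x‖² e^Γ` for all `x` with `0 < ‖x‖ < 1`. -/
theorem stmt4 (Γ : EuclideanSpace ℝ (Fin 2) → ℝ)
    (hΓ : ∀ x, Γ x = -4 * Real.log ‖x‖ - 2 * Real.log ((1 / Real.sqrt 2) * Real.log (1 / ‖x‖))) :
    ∀ x : EuclideanSpace ℝ (Fin 2), 0 < ‖x‖ → ‖x‖ < 1 →
      laplacian Γ x = ‖x‖ ^ 2 * Real.exp (Γ x) := by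
  intro x hx0 hx1
  obtain rfl : Γ = fun y => greenProfile (‖y‖ ^ 2) := funext fun y => by rw [hΓ, greenProfile_sq]
  have ht0 : 0 < ‖x‖ ^ 2 := by positivity
  have ht1 : ‖x‖ ^ 2 < 1 := pow_lt_one₀ hx0.le hx1 two_ne_zero
  have hlog : log (‖x‖ ^ 2) ≠ 0 := (log_neg ht0 ht1).ne
  have hderiv : ∀ᶠ s in 𝓝 (‖x‖ ^ 2), HasDerivAt greenProfile (-2 / s - 2 / (s * log s)) s := by
    filter_upwards [Ioo_mem_nhds ht0 ht1] with s hs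
    exact hasDerivAt_greenProfile hs.1.ne' (log_neg hs.1 hs.2).ne
  rw [laplacian_comp_norm_sq hderiv (hasDerivAt_deriv_greenProfile ht0.ne' hlog),
    exp_greenProfile ht0.ne' hlog]
  field_simp
  ring
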